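/- arXiv:1207.4747 — 5 statements merged into one kernel-verified Lean document; each statement's English description precedes it below -/
import Mathlib

section
/- Let D be the product of n probability simplices Δ_{|Y_1|} × ... × Δ_{|Y_n|}, and let A be the matrix whose column indexed by (i,y) is ψ_i(y)/(λn) with ‖ψ_i(y)‖₂ ≤ R. Then for the structural SVM dual objective f(α) = (λ/2)‖Aα‖² − b^Tα, the curvature constant Cf satisfies Cf ≤ 4R²/λ. -/
/-!
The dual objective `f α = λ/2 ‖A α‖² - bᵀα` is quadratic, so its first-order Taylor remainder is
exact: `f (x + h) - f x - ⟨h, ∇f x⟩ = λ/2 ‖A h‖²`. Along `h = γ (s - x)` the quotient defining `Cf`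
is therefore `λ ‖A s - A x‖²`, independently of `γ`. Each block of `A α` is a convex combination of
the `ψᵢ(y) / (λn)`, so `‖A α‖ ≤ R/λ` on `D`, whence `‖A s - A x‖ ≤ 2R/λ` and `Cf ≤ 4R²/λ`.
-/

open RealInnerProductSpace Finset

section ColumnMap

variable {E : Type*} [NormedAddCommGroup E] [InnerProductSpace ℝ E]
  {ι : Type*} [Fintype ι] {κ : ι → Type*} [∀ i, Fintype (κ i)]

/-- The matrix with columns `ψ i y / c`, acting on block vectors `α = (α i y)`. -/
noncomputable def columnMap (c : ℝ) (ψ : ∀ i, κ i → E) : (∀ i, κ i → ℝ) →ₗ[ℝ] E where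
  toFun α := ∑ i, ∑ y, (α i y / c) • ψ i y
  map_add' α β := by simp only [Pi.add_apply, add_div, add_smul, sum_add_distrib]
  map_smul' a α := by
    simp only [Pi.smul_apply, smul_eq_mul, mul_div_assoc, mul_smul, smul_sum, RingHom.id_apply]

theorem columnMap_apply (c : ℝ) (ψ : ∀ i, κ i → E) (α : ∀ i, κ i → ℝ) :
    columnMap c ψ α = ∑ i, ∑ y, (α i y / c) • ψ i y :=
  rfl

theorem inner_columnMap (u : E) (c : ℝ) (ψ : ∀ i, κ i → E) (α : ∀ i, κ i → ℝ) :
    ⟪u, columnMap c ψ α⟫ = ∑ i, ∑ y, α i y * (⟪u, ψ i y⟫ / c) := by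
  simp only [columnMap_apply, inner_sum, real_inner_smul_right, div_mul_eq_mul_div, mul_div_assoc]

theorem sum_sum_mul_grad_eq (u : E) (lam c c' : ℝ) (ψ : ∀ i, κ i → E) (b : ∀ i, κ i → ℝ)
    (h : ∀ i, κ i → ℝ) :
    ∑ i, ∑ y, h i y * (lam * (⟪u, ψ i y⟫ / c) - b i y / c') =
      lam * ⟪u, columnMap c ψ h⟫ - columnMap c' b h := by
  rw [inner_columnMap, columnMap_apply, mul_sum, ← sum_sub_distrib]
  refine sum_congr rfl fun i _ => ?_
  rw [mul_sum, ← sum_sub_distrib]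
  exact sum_congr rfl fun y _ => by rw [smul_eq_mul]; ring

theorem norm_sum_div_smul_le_of_mem_stdSimplex {ι : Type*} [Fintype ι] {w : ι → ℝ}
    (hw : w ∈ stdSimplex ℝ ι) {v : ι → E} {R : ℝ} (hv : ∀ i, ‖v i‖ ≤ R) {c : ℝ} (hc : 0 ≤ c) :
    ‖∑ i, (w i / c) • v i‖ ≤ R / c :=
  calc ‖∑ i, (w i / c) • v i‖
      ≤ ∑ i, w i / c * R := (norm_sum_le _ _).trans <| sum_le_sum fun i _ => by
        rw [norm_smul, Real.norm_of_nonneg (div_nonneg (hw.1 i) hc)]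
        exact mul_le_mul_of_nonneg_left (hv i) (div_nonneg (hw.1 i) hc)
    _ = R / c := by rw [← sum_mul, ← sum_div, hw.2]; ring

theorem norm_columnMap_le {α : ∀ i, κ i → ℝ} (hα : ∀ i, α i ∈ stdSimplex ℝ (κ i))
    {ψ : ∀ i, κ i → E} {R : ℝ} (hψ : ∀ i y, ‖ψ i y‖ ≤ R) {c : ℝ} (hc : 0 ≤ c) :
    ‖columnMap c ψ α‖ ≤ Fintype.card ι * R / c :=
  calc ‖columnMap c ψ α‖
      ≤ ∑ i, ‖∑ y, (α i y / c) • ψ i y‖ := norm_sum_le _ _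
    _ ≤ ∑ _i : ι, R / c :=
        sum_le_sum fun i _ => norm_sum_div_smul_le_of_mem_stdSimplex (hα i) (hψ i) hc
    _ = Fintype.card ι * R / c := by rw [sum_const, card_univ, nsmul_eq_mul, mul_div_assoc]

-- `|R|` rather than `R`: when `ι` is empty nothing forces `R ≥ 0`.
theorem norm_columnMap_mul_card_le {α : ∀ i, κ i → ℝ} (hα : ∀ i, α i ∈ stdSimplex ℝ (κ i))
    {ψ : ∀ i, κ i → E} {R : ℝ} (hψ : ∀ i y, ‖ψ i y‖ ≤ R) {lam : ℝ} (hlam : 0 ≤ lam) :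
    ‖columnMap (lam * Fintype.card ι) ψ α‖ ≤ |R| / lam :=
  calc ‖columnMap (lam * Fintype.card ι) ψ α‖
      ≤ Fintype.card ι * R / (lam * Fintype.card ι) := norm_columnMap_le hα hψ (by positivity)
    _ ≤ |R| / lam := by
        rcases (Fintype.card ι).eq_zero_or_pos with h0 | hpos
        · simp only [h0, CharP.cast_eq_zero, zero_mul, mul_zero, div_zero]; positivity
        · rw [mul_comm lam, mul_div_mul_left _ _ (by positivity : (Fintype.card ι : ℝ) ≠ 0)]
          gcongr
          exact le_abs_self R

end ColumnMap

theorem quadratic_bregman_eq {V E : Type*} [AddCommGroup V] [Module ℝ V]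
    [NormedAddCommGroup E] [InnerProductSpace ℝ E] (A : V →ₗ[ℝ] E) (ℓ : V →ₗ[ℝ] ℝ) (lam : ℝ)
    {f : V → ℝ} (hf : ∀ α, f α = lam / 2 * ‖A α‖ ^ 2 - ℓ α) (x h : V) :
    f (x + h) - f x - (lam * ⟪A x, A h⟫ - ℓ h) = lam / 2 * ‖A h‖ ^ 2 := by
  rw [hf, hf, map_add, map_add, norm_add_sq_real]
  ring

theorem svm_curvature_bound_general {d n : ℕ}
    (lam R : ℝ) (hlam : 0 < lam)
    (k : Fin n → ℕ)
    (ψ : ∀ i : Fin n, Fin (k i) → EuclideanSpace ℝ (Fin d))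
    (L : ∀ i : Fin n, Fin (k i) → ℝ)
    (hR : ∀ i y, ‖ψ i y‖ ≤ R)
    (Amul : (∀ i : Fin n, Fin (k i) → ℝ) → EuclideanSpace ℝ (Fin d))
    (hAmul : ∀ α, Amul α = ∑ i, ∑ y, (α i y / (lam * n)) • ψ i y)
    (f : (∀ i : Fin n, Fin (k i) → ℝ) → ℝ)
    (hf : ∀ α, f α = lam / 2 * ‖Amul α‖ ^ 2 - ∑ i, ∑ y, (L i y / n) * α i y)
    (gradf : (∀ i : Fin n, Fin (k i) → ℝ) → (∀ i : Fin n, Fin (k i) → ℝ))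
    (hgrad : ∀ α i y, gradf α i y = lam * (⟪Amul α, ψ i y⟫ / (lam * n)) - L i y / n)
    (Dset : Set (∀ i : Fin n, Fin (k i) → ℝ))
    (hD : Dset = {α | ∀ i, α i ∈ stdSimplex ℝ (Fin (k i))})
    (Cf : ℝ)
    (hCf : Cf = sSup {c : ℝ | ∃ x ∈ Dset, ∃ s ∈ Dset, ∃ γ ∈ Set.Ioc (0 : ℝ) 1,
        c = 2 / γ ^ 2 * (f (x + γ • (s - x)) - f x
              - ∑ i, ∑ y, ((x + γ • (s - x) - x) i y) * gradf x i y)}) :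
    Cf ≤ 4 * R ^ 2 / lam := by
  have hA : Amul = columnMap (lam * n) ψ := funext hAmul
  have hℓ : ∀ α, ∑ i, ∑ y, L i y / n * α i y = columnMap (n : ℝ) L α := fun α => by
    rw [columnMap_apply]
    exact sum_congr rfl fun i _ => sum_congr rfl fun y _ => by rw [smul_eq_mul]; ring
  have hgap : ∀ x h, f (x + h) - f x - ∑ i, ∑ y, h i y * gradf x i y
      = lam / 2 * ‖Amul h‖ ^ 2 := fun x h => by
    simp only [hgrad, sum_sum_mul_grad_eq, hA]
    exact quadratic_bregman_eq _ _ lam (fun α => by rw [hf, hA, hℓ]) x h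
  have hnorm : ∀ α ∈ Dset, ‖Amul α‖ ≤ |R| / lam := fun α hα => by
    rw [hD] at hα
    simpa [hA] using norm_columnMap_mul_card_le hα hR hlam.le
  rw [hCf]
  refine Real.sSup_le ?_ (by positivity)
  rintro c ⟨x, hx, s, hs, γ, ⟨hγ, -⟩, rfl⟩
  rw [add_sub_cancel_left, hgap, hA, map_smul, map_sub, ← hA, norm_smul, Real.norm_of_nonneg hγ.le]
  calc 2 / γ ^ 2 * (lam / 2 * (γ * ‖Amul s - Amul x‖) ^ 2) = lam * ‖Amul s - Amul x‖ ^ 2 := by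
        field_simp
    _ ≤ lam * (|R| / lam + |R| / lam) ^ 2 := by
        gcongr
        exact (norm_sub_le _ _).trans (add_le_add (hnorm s hs) (hnorm x hx))
    _ = 4 * R ^ 2 / lam := by
        field_simp
        rw [sq_abs]
        ring

/-- For the structural SVM dual objective over the product of probability
simplices, with feature columns `ψᵢ(y)/(λn)` of norm `‖ψᵢ(y)‖ ≤ R`, the
curvature constant satisfies `Cf ≤ 4R²/λ`. -/
theorem svm_curvature_bound {d n : ℕ} (hn : 1 ≤ n)
    (lam R : ℝ) (hlam : 0 < lam)
    (k : Fin n → ℕ) (hk : ∀ i, 1 ≤ k i)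
    (ψ : ∀ i : Fin n, Fin (k i) → EuclideanSpace ℝ (Fin d))
    (L : ∀ i : Fin n, Fin (k i) → ℝ)
    (hR : ∀ i y, ‖ψ i y‖ ≤ R)
    (Amul : (∀ i : Fin n, Fin (k i) → ℝ) → EuclideanSpace ℝ (Fin d))
    (hAmul : ∀ α, Amul α = ∑ i, ∑ y, (α i y / (lam * n)) • ψ i y)
    (f : (∀ i : Fin n, Fin (k i) → ℝ) → ℝ)
    (hf : ∀ α, f α = lam / 2 * ‖Amul α‖ ^ 2 - ∑ i, ∑ y, (L i y / n) * α i y)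
    (gradf : (∀ i : Fin n, Fin (k i) → ℝ) → (∀ i : Fin n, Fin (k i) → ℝ))
    (hgrad : ∀ α i y, gradf α i y = lam * (⟪Amul α, ψ i y⟫ / (lam * n)) - L i y / n)
    (Dset : Set (∀ i : Fin n, Fin (k i) → ℝ))
    (hD : Dset = {α | ∀ i, α i ∈ stdSimplex ℝ (Fin (k i))})
    (Cf : ℝ)
    (hCf : Cf = sSup {c : ℝ | ∃ x ∈ Dset, ∃ s ∈ Dset, ∃ γ ∈ Set.Ioc (0 : ℝ) 1,
        c = 2 / γ ^ 2 * (f (x + γ • (s - x)) - f x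
              - ∑ i, ∑ y, ((x + γ • (s - x) - x) i y) * gradf x i y)}) :
    Cf ≤ 4 * R ^ 2 / lam :=
  svm_curvature_bound_general lam R hlam k ψ L hR Amul hAmul f hf gradf hgrad Dset hD Cf hCf
end

section
/- Under the same setup, the block curvature on the i-th simplex factor satisfies Cf^(i) ≤ 4R²/(λn²), and hence the product curvature constant C_f^⊗ = Σ_{i=1}^n Cf^(i) satisfies C_f^⊗ ≤ 4R²/(λn), which is n times smaller than the bound 4R²/λ on the full curvature Cf. -/
open RealInnerProductSpace

/-! Since `f` is quadratic, the curvature quotient of the step `γ δ`, where `δ` is `s - xᵢ`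
padded by zeros outside block `i`, is exactly its second-order term
`λ ‖A δ‖² = ‖v‖² / (λ n²)` with `v = Σ_y (s_y - x_{i,y}) ψ_{i,y}`:
the factor `1/n²` is the square of the `1/(λ n)` scaling in `A`, and only one block moves.
As a difference of two convex combinations of vectors of norm at most `R`, `‖v‖ ≤ 2R`.
Summing the `n` block bounds gives `4R²/(λ n)`. -/

theorem Fintype.sum_apply_update {ι : Type*} [Fintype ι] [DecidableEq ι] {β : ι → Type*}
    {M : Type*} [AddCommGroup M] (g : ∀ j, β j → M) (x : ∀ j, β j) (i : ι) (z : β i) :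
    ∑ j, g j (Function.update x i z j) = ∑ j, g j (x j) + (g i z - g i (x i)) := by
  rw [Fintype.sum_eq_add_sum_compl i, Fintype.sum_eq_add_sum_compl i (fun j => g j (x j)),
    Function.update_self]
  have hcompl : ∑ j ∈ {i}ᶜ, g j (Function.update x i z j) = ∑ j ∈ {i}ᶜ, g j (x j) :=
    Finset.sum_congr rfl fun j hj =>
      by rw [Function.update_of_ne (by simpa using hj)]
  rw [hcompl]
  abel

section Simplex

variable {ι E : Type*} [Fintype ι] [SeminormedAddCommGroup E] [NormedSpace ℝ E]
  {ψ : ι → E} {R : ℝ} {s x : ι → ℝ}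

theorem norm_sum_smul_le_of_mem_stdSimplex (hψ : ∀ y, ‖ψ y‖ ≤ R) (hs : s ∈ stdSimplex ℝ ι) :
    ‖∑ y, s y • ψ y‖ ≤ R :=
  calc ‖∑ y, s y • ψ y‖ ≤ ∑ y, s y * R :=
        norm_sum_le_of_le _ fun y _ => by
          rw [norm_smul, Real.norm_of_nonneg (hs.1 y)]
          exact mul_le_mul_of_nonneg_left (hψ y) (hs.1 y)
    _ = R := by rw [← Finset.sum_mul, hs.2, one_mul]

theorem norm_sum_sub_smul_le_of_mem_stdSimplex (hψ : ∀ y, ‖ψ y‖ ≤ R)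
    (hs : s ∈ stdSimplex ℝ ι) (hx : x ∈ stdSimplex ℝ ι) :
    ‖∑ y, (s y - x y) • ψ y‖ ≤ 2 * R := by
  simp only [sub_smul, Finset.sum_sub_distrib]
  linarith [norm_sub_le (∑ y, s y • ψ y) (∑ y, x y • ψ y),
    norm_sum_smul_le_of_mem_stdSimplex hψ hs, norm_sum_smul_le_of_mem_stdSimplex hψ hx]

end Simplex

section BlockCurvature

variable {E : Type*} [NormedAddCommGroup E] [InnerProductSpace ℝ E] {n : ℕ} {k : Fin n → ℕ}
  {lam : ℝ} {ψ : ∀ i : Fin n, Fin (k i) → E} {L : ∀ i : Fin n, Fin (k i) → ℝ}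
  {Amul : (∀ i : Fin n, Fin (k i) → ℝ) → E} {f : (∀ i : Fin n, Fin (k i) → ℝ) → ℝ}
  {gradf : (∀ i : Fin n, Fin (k i) → ℝ) → (∀ i : Fin n, Fin (k i) → ℝ)}
  {x : ∀ i : Fin n, Fin (k i) → ℝ} {i : Fin n} {s : Fin (k i) → ℝ} {γ : ℝ}

theorem amul_update_block (hAmul : ∀ α, Amul α = ∑ i, ∑ y, (α i y / (lam * n)) • ψ i y) :
    Amul (Function.update x i (x i + γ • (s - x i)))
      = Amul x + (γ / (lam * n)) • ∑ y, (s y - x i y) • ψ i y := by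
  rw [hAmul, hAmul, Fintype.sum_apply_update (fun j (a : Fin (k j) → ℝ) =>
    ∑ y, (a y / (lam * n)) • ψ j y), ← Finset.sum_sub_distrib, Finset.smul_sum]
  congr 1
  refine Finset.sum_congr rfl fun y _ => ?_
  simp only [Pi.add_apply, Pi.smul_apply, Pi.sub_apply, smul_eq_mul, ← sub_smul, smul_smul]
  congr 1
  ring

theorem linear_update_block :
    ∑ j, ∑ y, L j y / n * Function.update x i (x i + γ • (s - x i)) j y
      = ∑ j, ∑ y, L j y / n * x j y + γ / n * ∑ y, L i y * (s y - x i y) := by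
  rw [Fintype.sum_apply_update (fun j (a : Fin (k j) → ℝ) => ∑ y, L j y / n * a y),
    ← Finset.sum_sub_distrib, Finset.mul_sum]
  congr 1
  refine Finset.sum_congr rfl fun y _ => ?_
  simp only [Pi.add_apply, Pi.smul_apply, Pi.sub_apply, smul_eq_mul]
  ring

theorem block_curvature_quotient_eq (hlam : lam ≠ 0) (hn : (n : ℝ) ≠ 0) (hγ : γ ≠ 0)
    (hAmul : ∀ α, Amul α = ∑ i, ∑ y, (α i y / (lam * n)) • ψ i y)
    (hf : ∀ α, f α = lam / 2 * ‖Amul α‖ ^ 2 - ∑ i, ∑ y, (L i y / n) * α i y)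
    (hgrad : ∀ α i y, gradf α i y = lam * (⟪Amul α, ψ i y⟫ / (lam * n)) - L i y / n) :
    2 / γ ^ 2 * (f (Function.update x i (x i + γ • (s - x i))) - f x
        - ∑ y, (γ * (s y - x i y)) * gradf x i y)
      = ‖∑ y, (s y - x i y) • ψ i y‖ ^ 2 / (lam * n ^ 2) := by
  set v := ∑ y, (s y - x i y) • ψ i y
  have hgrad_dir : ∑ y, (γ * (s y - x i y)) * gradf x i y
      = γ / n * ⟪Amul x, v⟫ - γ / n * ∑ y, L i y * (s y - x i y) := by
    simp only [v, inner_sum, real_inner_smul_right, Finset.mul_sum, ← Finset.sum_sub_distrib]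
    refine Finset.sum_congr rfl fun y _ => ?_
    rw [hgrad]
    field_simp
  rw [hf, hf, amul_update_block hAmul, linear_update_block, hgrad_dir, norm_add_sq_real,
    real_inner_smul_right, norm_smul, mul_pow, Real.norm_eq_abs, sq_abs]
  field_simp
  ring

end BlockCurvature

theorem svm_block_curvature_bound_general {d n : ℕ}
    (lam R : ℝ) (hlam : 0 < lam)
    (k : Fin n → ℕ)
    (ψ : ∀ i : Fin n, Fin (k i) → EuclideanSpace ℝ (Fin d))
    (L : ∀ i : Fin n, Fin (k i) → ℝ)
    (hR : ∀ i y, ‖ψ i y‖ ≤ R)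
    (Amul : (∀ i : Fin n, Fin (k i) → ℝ) → EuclideanSpace ℝ (Fin d))
    (hAmul : ∀ α, Amul α = ∑ i, ∑ y, (α i y / (lam * n)) • ψ i y)
    (f : (∀ i : Fin n, Fin (k i) → ℝ) → ℝ)
    (hf : ∀ α, f α = lam / 2 * ‖Amul α‖ ^ 2 - ∑ i, ∑ y, (L i y / n) * α i y)
    (gradf : (∀ i : Fin n, Fin (k i) → ℝ) → (∀ i : Fin n, Fin (k i) → ℝ))
    (hgrad : ∀ α i y, gradf α i y = lam * (⟪Amul α, ψ i y⟫ / (lam * n)) - L i y / n)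
    (Dset : Set (∀ i : Fin n, Fin (k i) → ℝ))
    (hD : Dset = {α | ∀ i, α i ∈ stdSimplex ℝ (Fin (k i))})
    (Cfi : Fin n → ℝ)
    (hCfi : ∀ i, Cfi i = sSup {c : ℝ | ∃ x ∈ Dset, ∃ si ∈ stdSimplex ℝ (Fin (k i)),
        ∃ γ ∈ Set.Ioc (0 : ℝ) 1,
        c = 2 / γ ^ 2 * (f (Function.update x i (x i + γ • (si - x i))) - f x
              - ∑ y, (γ * (si y - x i y)) * gradf x i y)}) :
    (∀ i, Cfi i ≤ 4 * R ^ 2 / (lam * n ^ 2)) ∧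
      (∑ i, Cfi i) ≤ 4 * R ^ 2 / (lam * n) := by
  have hblock : ∀ i, Cfi i ≤ 4 * R ^ 2 / (lam * n ^ 2) := by
    intro i
    rw [hCfi]
    refine Real.sSup_le ?_ (by positivity)
    rintro c ⟨x, hx, s, hs, γ, hγ, rfl⟩
    rw [hD] at hx
    rw [block_curvature_quotient_eq hlam.ne' (Nat.cast_ne_zero.2 i.pos.ne') hγ.1.ne' hAmul hf
      hgrad]
    have hv := norm_sum_sub_smul_le_of_mem_stdSimplex (hR i) hs (hx i)
    gcongr
    exact (pow_le_pow_left₀ (norm_nonneg _) hv 2).trans_eq (by ring)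
  refine ⟨hblock, ?_⟩
  calc ∑ i, Cfi i ≤ n * (4 * R ^ 2 / (lam * n ^ 2)) := by
        simpa using Finset.sum_le_sum fun i (_ : i ∈ Finset.univ) => hblock i
    _ = 4 * R ^ 2 / (lam * n) := by
        rcases eq_or_ne (n : ℝ) 0 with hn | hn
        · simp [hn]
        · field_simp

/-- For the structural SVM dual over the product of simplices, each block
curvature satisfies `Cf⁽ⁱ⁾ ≤ 4R²/(λn²)`, hence the product curvature constant
`Cf^⊗ = Σᵢ Cf⁽ⁱ⁾` satisfies `Cf^⊗ ≤ 4R²/(λn)`. -/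
theorem svm_block_curvature_bound {d n : ℕ} (hn : 1 ≤ n)
    (lam R : ℝ) (hlam : 0 < lam)
    (k : Fin n → ℕ) (hk : ∀ i, 1 ≤ k i)
    (ψ : ∀ i : Fin n, Fin (k i) → EuclideanSpace ℝ (Fin d))
    (L : ∀ i : Fin n, Fin (k i) → ℝ)
    (hR : ∀ i y, ‖ψ i y‖ ≤ R)
    (Amul : (∀ i : Fin n, Fin (k i) → ℝ) → EuclideanSpace ℝ (Fin d))
    (hAmul : ∀ α, Amul α = ∑ i, ∑ y, (α i y / (lam * n)) • ψ i y)
    (f : (∀ i : Fin n, Fin (k i) → ℝ) → ℝ)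
    (hf : ∀ α, f α = lam / 2 * ‖Amul α‖ ^ 2 - ∑ i, ∑ y, (L i y / n) * α i y)
    (gradf : (∀ i : Fin n, Fin (k i) → ℝ) → (∀ i : Fin n, Fin (k i) → ℝ))
    (hgrad : ∀ α i y, gradf α i y = lam * (⟪Amul α, ψ i y⟫ / (lam * n)) - L i y / n)
    (Dset : Set (∀ i : Fin n, Fin (k i) → ℝ))
    (hD : Dset = {α | ∀ i, α i ∈ stdSimplex ℝ (Fin (k i))})
    (Cfi : Fin n → ℝ)
    (hCfi : ∀ i, Cfi i = sSup {c : ℝ | ∃ x ∈ Dset, ∃ si ∈ stdSimplex ℝ (Fin (k i)),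
        ∃ γ ∈ Set.Ioc (0 : ℝ) 1,
        c = 2 / γ ^ 2 * (f (Function.update x i (x i + γ • (si - x i))) - f x
              - ∑ y, (γ * (si y - x i y)) * gradf x i y)}) :
    (∀ i, Cfi i ≤ 4 * R ^ 2 / (lam * n ^ 2)) ∧
      (∑ i, Cfi i) ≤ 4 * R ^ 2 / (lam * n) :=
  svm_block_curvature_bound_general lam R hlam k ψ L hR Amul hAmul f hf gradf hgrad Dset hD Cfi hCfi
end

section
/- Let (h_k)_{k≥0} be a sequence of nonnegative reals satisfying h_{k+1} ≤ (1 − γ_k ν / n) h_k + γ_k² C ν / (2n) for all k ≥ 0, where γ_k = 2n/(νk + 2n), n ≥ 1, ν ∈ (0,1], C > 0 with h_0 ≤ C. Then h_k ≤ 2nC/(νk + 2n) for all k ≥ 0. -/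
/-- Primal convergence recurrence: if `h_{k+1} ≤ (1 − γ_k ν/n) h_k + γ_k² C ν/(2n)`
with `γ_k = 2n/(νk + 2n)` and `h_0 ≤ C`, then `h_k ≤ 2nC/(νk + 2n)` for all `k`. -/
theorem frank_wolfe_recurrence (n : ℕ) (hn : 1 ≤ n) (ν C : ℝ)
    (hν : ν ∈ Set.Ioc (0 : ℝ) 1) (hC : 0 < C)
    (h : ℕ → ℝ) (hpos : ∀ k, 0 ≤ h k) (h0 : h 0 ≤ C)
    (γ : ℕ → ℝ) (hγ : ∀ k : ℕ, γ k = 2 * n / (ν * k + 2 * n))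
    (hrec : ∀ k : ℕ, h (k + 1) ≤ (1 - γ k * ν / n) * h k + (γ k) ^ 2 * C * ν / (2 * n)) :
    ∀ k : ℕ, h k ≤ 2 * n * C / (ν * k + 2 * n) := by
  obtain ⟨hν0, hν1⟩ := hν
  have hn' : (1:ℝ) ≤ n := by exact_mod_cast hn
  intro k
  induction k with
  | zero =>
    have : ν * (0:ℕ) + 2 * n = 2 * n := by push_cast; ring
    have h2n : (0:ℝ) < 2 * n := by linarith
    rw [this, mul_comm, mul_div_assoc, div_self (ne_of_gt h2n), mul_one]
    exact h0
  | succ k ih =>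
    have hk0 : (0:ℝ) ≤ (k:ℕ) := Nat.cast_nonneg k
    have hnn : (0:ℝ) < n := by linarith
    set D : ℝ := ν * k + 2 * n with hDdef
    have hD : (0:ℝ) < D := by rw [hDdef]; nlinarith
    have hγk := hγ k
    have hfac : 0 ≤ 1 - γ k * ν / n := by
      rw [hγk, div_mul_eq_mul_div, div_div, sub_nonneg, div_le_one (by nlinarith)]
      nlinarith
    have step := hrec k
    have step2 : h (k+1) ≤ (1 - γ k * ν / n) * (2 * n * C / D) + (γ k) ^ 2 * C * ν / (2 * n) := by
      have := mul_le_mul_of_nonneg_left ih hfac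
      linarith
    have hD' : ν * ((k+1 : ℕ) : ℝ) + 2 * n = D + ν := by rw [hDdef]; push_cast; ring
    rw [hD']
    have hLHS : (1 - γ k * ν / n) * (2 * n * C / D) + (γ k) ^ 2 * C * ν / (2 * n)
        = 2 * n * C * (D - ν) / D ^ 2 := by
      rw [hγk]
      field_simp
      ring
    have hfin : 2 * n * C * (D - ν) / D ^ 2 ≤ 2 * n * C / (D + ν) := by
      rw [div_le_div_iff₀ (by positivity) (by nlinarith)]
      have hnneg : (0:ℝ) ≤ 2 * n * C * ν ^ 2 := by positivity
      nlinarith [hnneg]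
    calc h (k+1) ≤ 2 * n * C * (D - ν) / D ^ 2 := by rw [← hLHS]; exact step2
      _ ≤ 2 * n * C / (D + ν) := hfin
end

section
/- Let g_k, h_k ≥ 0 satisfy g_k ≤ (n/(ν γ_k))(h_k − h_{k+1}) + γ_k C/2 for k = 0,...,K with γ_k = 2n/(νk+2n) and h_k ≤ 2nC/(νk+2n). Then with weights ρ_k = 2k/(K(K+1)) for K ≥ 1, the weighted average satisfies Σ_{k=0}^K ρ_k g_k ≤ 6nC/(ν(K+1)). Consequently, there exists some k̂ ≤ K with g_{k̂} ≤ 6nC/(ν(K+1)). -/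
/-!
Multiplying the `k`-th gap inequality by `ρ_k` turns the coefficient of `h_k - h_{k+1}` into
`a_k = k (νk + 2n) / (νK(K+1))`, which vanishes at `k = 0`. Summation by parts leaves the terms
`(a_{k+1} - a_k) h_{k+1}`, each at most `4nC / (νK(K+1))` by the bound on `h`, while every error
term `ρ_k γ_k C / 2` is at most `2nC / (νK(K+1))`; only the `K` indices `k ≥ 1` contribute. Since
the `ρ_k` are nonnegative and sum to one, the smallest `g_k` is at most their weighted average.
-/

open Finset

theorem Finset.exists_le_of_sum_mul_le {ι 𝕜 : Type*} [Field 𝕜] [LinearOrder 𝕜]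
    [IsStrictOrderedRing 𝕜] {s : Finset ι} {w f : ι → 𝕜} {B : 𝕜}
    (hw₀ : ∀ i ∈ s, 0 ≤ w i) (hw₁ : ∑ i ∈ s, w i = 1) (h : ∑ i ∈ s, w i * f i ≤ B) :
    ∃ i ∈ s, f i ≤ B := by
  have hpos : 0 < ∑ i ∈ s, w i := hw₁ ▸ one_pos
  obtain ⟨i, hi, hmin⟩ := s.exists_mem_eq_inf' (nonempty_of_sum_ne_zero hpos.ne') f
  refine ⟨i, hi, ?_⟩
  calc f i = s.inf' _ f := hmin.symm
    _ ≤ s.centerMass w f := inf_le_centerMass hw₀ hpos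
    _ = ∑ i ∈ s, w i * f i := centerMass_eq_of_sum_1 _ _ hw₁
    _ ≤ B := h

theorem Finset.sum_range_succ_mul_sub_succ {R : Type*} [CommRing R] (a h : ℕ → R) (K : ℕ) :
    ∑ k ∈ range (K + 1), a k * (h k - h (k + 1)) =
      a 0 * h 0 + ∑ k ∈ range K, (a (k + 1) - a k) * h (k + 1) - a K * h (K + 1) := by
  induction K with
  | zero => simp [mul_sub]
  | succ K ih => rw [sum_range_succ, ih, sum_range_succ]; ring

theorem Finset.sum_range_succ_mul_sub_succ_add_le {R : Type*} [CommRing R] [LinearOrder R]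
    [IsStrictOrderedRing R] {a h e : ℕ → R} {K : ℕ} {B : R} (ha₀ : a 0 = 0) (he₀ : e 0 = 0)
    (hlast : 0 ≤ a K * h (K + 1))
    (hstep : ∀ k < K, (a (k + 1) - a k) * h (k + 1) + e (k + 1) ≤ B) :
    ∑ k ∈ range (K + 1), (a k * (h k - h (k + 1)) + e k) ≤ K * B := by
  rw [sum_add_distrib, sum_range_succ_mul_sub_succ, sum_range_succ' e, ha₀, he₀]
  calc _ ≤ ∑ k ∈ range K, ((a (k + 1) - a k) * h (k + 1) + e (k + 1)) := by
        rw [sum_add_distrib]; linarith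
    _ ≤ ∑ _k ∈ range K, B := sum_le_sum fun k hk => hstep k (mem_range.mp hk)
    _ = K * B := by rw [sum_const, card_range, nsmul_eq_mul]

noncomputable def stepSize (n ν : ℝ) (k : ℕ) : ℝ := 2 * n / (ν * k + 2 * n)

noncomputable def averagingWeight (K k : ℕ) : ℝ := 2 * k / (K * (K + 1))

noncomputable def telescopingCoeff (n ν : ℝ) (K k : ℕ) : ℝ :=
  k * (ν * k + 2 * n) / (ν * K * (K + 1))

theorem averagingWeight_nonneg (K k : ℕ) : 0 ≤ averagingWeight K k := by
  unfold averagingWeight; positivity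

theorem sum_range_averagingWeight {K : ℕ} (hK : 0 < K) :
    ∑ k ∈ range (K + 1), averagingWeight K k = 1 := by
  have hgauss : ((∑ k ∈ range (K + 1), k : ℕ) : ℝ) * 2 = K * (K + 1) := by
    exact_mod_cast (sum_range_id_mul_two (K + 1)).trans (by rw [add_tsub_cancel_right, mul_comm])
  simp only [averagingWeight]
  rw [← sum_div, ← mul_sum, mul_comm, ← Nat.cast_sum, hgauss, div_self (by positivity)]

section

variable {n ν C : ℝ}

theorem averagingWeight_mul_div_stepSize (hn : 0 < n) (hν : 0 < ν) (K k : ℕ) :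
    averagingWeight K k * (n / (ν * stepSize n ν k)) = telescopingCoeff n ν K k := by
  have : 0 < ν * k + 2 * n := by positivity
  unfold averagingWeight stepSize telescopingCoeff
  field_simp

theorem averagingWeight_mul_stepSize_le (hn : 0 < n) (hν : 0 < ν) (hC : 0 ≤ C) (K k : ℕ) :
    averagingWeight K k * stepSize n ν k * C / 2 ≤ 2 * n * C / (ν * K * (K + 1)) := by
  have hs : 0 < ν * k + 2 * n := by positivity
  calc _ = ν * k / (ν * k + 2 * n) * (2 * n * C / (ν * K * (K + 1))) := by
        unfold averagingWeight stepSize; field_simp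
    _ ≤ 1 * (2 * n * C / (ν * K * (K + 1))) := by
        gcongr
        rw [div_le_one hs]; linarith
    _ = _ := one_mul _

theorem telescopingCoeff_succ_sub_mul_le (hn : 0 < n) (hν : 0 < ν) (hC : 0 ≤ C) {K k : ℕ}
    {x : ℝ} (hx : x ≤ 2 * n * C / (ν * ↑(k + 1) + 2 * n)) :
    (telescopingCoeff n ν K (k + 1) - telescopingCoeff n ν K k) * x ≤
      4 * n * C / (ν * K * (K + 1)) := by
  push_cast at hx
  have hs : 0 < ν * (k + 1) + 2 * n := by positivity
  have hincr : telescopingCoeff n ν K (k + 1) - telescopingCoeff n ν K k =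
      (ν * (2 * k + 1) + 2 * n) / (ν * K * (K + 1)) := by
    unfold telescopingCoeff; push_cast; ring
  rw [hincr, div_mul_eq_mul_div]
  refine div_le_div_of_nonneg_right ?_ (by positivity)
  calc _ ≤ (ν * (2 * k + 1) + 2 * n) * (2 * n * C / (ν * (k + 1) + 2 * n)) := by gcongr
    _ ≤ 2 * (ν * (k + 1) + 2 * n) * (2 * n * C / (ν * (k + 1) + 2 * n)) := by
        gcongr; linarith
    _ = 4 * n * C := by field_simp; ring

theorem sum_averagingWeight_mul_le (hn : 0 < n) (hν : 0 < ν) (hC : 0 ≤ C) {K : ℕ} (hK : 0 < K)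
    {g h : ℕ → ℝ}
    (hgap : ∀ k ≤ K, g k ≤ (n / (ν * stepSize n ν k)) * (h k - h (k + 1)) + stepSize n ν k * C / 2)
    (hh : ∀ k ≤ K, h k ≤ 2 * n * C / (ν * k + 2 * n)) (hlast : 0 ≤ h (K + 1)) :
    ∑ k ∈ range (K + 1), averagingWeight K k * g k ≤ 6 * n * C / (ν * (K + 1)) := by
  have hterm : ∀ k ∈ range (K + 1), averagingWeight K k * g k ≤
      telescopingCoeff n ν K k * (h k - h (k + 1)) + averagingWeight K k * stepSize n ν k * C / 2 := by
    intro k hk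
    calc _ ≤ averagingWeight K k *
          ((n / (ν * stepSize n ν k)) * (h k - h (k + 1)) + stepSize n ν k * C / 2) :=
          mul_le_mul_of_nonneg_left (hgap k (mem_range_succ_iff.mp hk)) (averagingWeight_nonneg K k)
      _ = _ := by rw [mul_add, ← mul_assoc, averagingWeight_mul_div_stepSize hn hν]; ring
  have hstep : ∀ k < K, (telescopingCoeff n ν K (k + 1) - telescopingCoeff n ν K k) * h (k + 1) +
      averagingWeight K (k + 1) * stepSize n ν (k + 1) * C / 2 ≤ 6 * n * C / (ν * K * (K + 1)) :=
    fun k hk => (add_le_add (telescopingCoeff_succ_sub_mul_le hn hν hC (hh (k + 1) hk))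
      (averagingWeight_mul_stepSize_le hn hν hC K (k + 1))).trans_eq (by ring)
  have hlast' : 0 ≤ telescopingCoeff n ν K K * h (K + 1) :=
    mul_nonneg (by unfold telescopingCoeff; positivity) hlast
  calc _ ≤ _ := sum_le_sum hterm
    _ ≤ K * (6 * n * C / (ν * K * (K + 1))) := sum_range_succ_mul_sub_succ_add_le
        (by simp [telescopingCoeff]) (by simp [averagingWeight]) hlast' hstep
    _ = 6 * n * C / (ν * (K + 1)) := by field_simp

end

theorem weighted_average_gap_bound_general (n : ℕ) (hn : 1 ≤ n) (ν C : ℝ)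
    (hν : ν ∈ Set.Ioc (0 : ℝ) 1) (hC : 0 < C) (K : ℕ) (hK : 1 ≤ K)
    (g h : ℕ → ℝ) (hhpos : ∀ k, 0 ≤ h k)
    (γ : ℕ → ℝ) (hγ : ∀ k : ℕ, γ k = 2 * n / (ν * k + 2 * n))
    (hgap : ∀ k ≤ K, g k ≤ (n / (ν * γ k)) * (h k - h (k + 1)) + γ k * C / 2)
    (hh : ∀ k ≤ K + 1, h k ≤ 2 * n * C / (ν * k + 2 * n))
    (ρ : ℕ → ℝ) (hρ : ∀ k : ℕ, ρ k = 2 * k / (K * (K + 1))) :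
    (∑ k ∈ Finset.range (K + 1), ρ k * g k) ≤ 6 * n * C / (ν * (K + 1)) ∧
      ∃ khat ≤ K, g khat ≤ 6 * n * C / (ν * (K + 1)) := by
  obtain rfl : γ = stepSize n ν := funext hγ
  obtain rfl : ρ = averagingWeight K := funext hρ
  have hsum := sum_averagingWeight_mul_le (by exact_mod_cast hn) hν.1 hC.le hK hgap
    (fun k hk => hh k (by omega)) (hhpos (K + 1))
  obtain ⟨khat, hkhat, hle⟩ := exists_le_of_sum_mul_le (fun k _ => averagingWeight_nonneg K k)
    (sum_range_averagingWeight hK) hsum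
  exact ⟨hsum, khat, mem_range_succ_iff.mp hkhat, hle⟩

/-- Primal-dual convergence via weighted averaging: if
`g_k ≤ (n/(ν γ_k))(h_k − h_{k+1}) + γ_k C/2` with `γ_k = 2n/(νk+2n)` and
`h_k ≤ 2nC/(νk+2n)`, then the weights `ρ_k = 2k/(K(K+1))` give
`Σ_{k=0}^K ρ_k g_k ≤ 6nC/(ν(K+1))`, and hence some iterate `k̂ ≤ K` has
`g_{k̂} ≤ 6nC/(ν(K+1))`. -/
theorem weighted_average_gap_bound (n : ℕ) (hn : 1 ≤ n) (ν C : ℝ)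
    (hν : ν ∈ Set.Ioc (0 : ℝ) 1) (hC : 0 < C) (K : ℕ) (hK : 1 ≤ K)
    (g h : ℕ → ℝ) (hgpos : ∀ k, 0 ≤ g k) (hhpos : ∀ k, 0 ≤ h k)
    (γ : ℕ → ℝ) (hγ : ∀ k : ℕ, γ k = 2 * n / (ν * k + 2 * n))
    (hgap : ∀ k ≤ K, g k ≤ (n / (ν * γ k)) * (h k - h (k + 1)) + γ k * C / 2)
    (hh : ∀ k ≤ K + 1, h k ≤ 2 * n * C / (ν * k + 2 * n))
    (ρ : ℕ → ℝ) (hρ : ∀ k : ℕ, ρ k = 2 * k / (K * (K + 1))) :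
    (∑ k ∈ Finset.range (K + 1), ρ k * g k) ≤ 6 * n * C / (ν * (K + 1)) ∧
      ∃ khat ≤ K, g khat ≤ 6 * n * C / (ν * (K + 1)) :=
  weighted_average_gap_bound_general n hn ν C hν hC K hK g h hhpos γ hγ hgap hh ρ hρ
end

section
/- For the structural SVM, the Lagrangian duality gap between the primal objective P(w) = (λ/2)‖w‖² + (1/n)Σ_i max_{y∈Y_i} H_i(y;w) at w = Aα and the dual objective D(α) = b^Tα − (λ/2)‖Aα‖² equals the linearization gap: P(Aα) − D(α) = ⟨α − s, ∇f(α)⟩, where f(α) = (λ/2)‖Aα‖² − b^Tα and s ∈ argmin_{s'∈D} ⟨s', ∇f(α)⟩. -/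
/-!
With `H_i(y) = L_i(y) - ⟪Aα, ψ_i(y)⟫` the gradient is `-H/n`, so the linearization is minimized
over the product of simplices blockwise at a vertex, namely at a maximizer of `H_i`; hence
`⟪s, ∇f(α)⟫ = -(1/n) Σ_i max_y H_i(y)`, the loss term of `P(Aα)` up to sign. On the other side
`⟪α, ∇f(α)⟫ = λ‖Aα‖² - bᵀα`, because `⟪Aα, Aα⟫ = Σ α_{iy} ⟪Aα, ψ_i(y)⟫ / (λn)`. The difference of
the two is `P(Aα) - D(α)`.
-/

open RealInnerProductSpace

theorem nonempty_of_mem_stdSimplex {ι : Type*} [Fintype ι] {s : ι → ℝ}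
    (hs : s ∈ stdSimplex ℝ ι) : Nonempty ι := by
  by_contra h
  rw [not_nonempty_iff] at h
  simpa using hs.2

theorem le_sum_mul_of_mem_stdSimplex {ι : Type*} [Fintype ι] {g : ι → ℝ} {m : ℝ}
    (hm : ∀ y, m ≤ g y) {s : ι → ℝ} (hs : s ∈ stdSimplex ℝ ι) : m ≤ ∑ y, s y * g y :=
  calc m = ∑ y, s y * m := by rw [← Finset.sum_mul, hs.2, one_mul]
    _ ≤ ∑ y, s y * g y := by gcongr with y; exacts [hs.1 y, hm y]

theorem sum_sum_mul_eq_of_isMinOn_pi_stdSimplex {ι : Type*} [Fintype ι] {κ : ι → Type*}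
    [∀ i, Fintype (κ i)] {g : ∀ i, κ i → ℝ} {y₀ : ∀ i, κ i} (hy₀ : ∀ i y, g i (y₀ i) ≤ g i y)
    {s : ∀ i, κ i → ℝ} (hs : ∀ i, s i ∈ stdSimplex ℝ (κ i))
    (hmin : IsMinOn (fun s' ↦ ∑ i, ∑ y, s' i y * g i y)
      {s' | ∀ i, s' i ∈ stdSimplex ℝ (κ i)} s) :
    ∑ i, ∑ y, s i y * g i y = ∑ i, g i (y₀ i) := by
  classical
  refine le_antisymm ?_ (Finset.sum_le_sum fun i _ ↦ le_sum_mul_of_mem_stdSimplex (hy₀ i) (hs i))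
  calc ∑ i, ∑ y, s i y * g i y
      ≤ ∑ i, ∑ y, (if y₀ i = y then 1 else 0) * g i y :=
        isMinOn_iff.mp hmin _ fun i ↦ ite_eq_mem_stdSimplex ℝ (y₀ i)
    _ = ∑ i, g i (y₀ i) := by simp only [ite_mul, one_mul, zero_mul, Finset.sum_ite_eq,
        Finset.mem_univ, if_true]

theorem mul_norm_sq_eq_sum_sum_mul_inner {E : Type*} [NormedAddCommGroup E]
    [InnerProductSpace ℝ E] {ι : Type*} [Fintype ι] {κ : ι → Type*} [∀ i, Fintype (κ i)]
    (c : ℝ) (a : ∀ i, κ i → ℝ) (v : ∀ i, κ i → E) {w : E}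
    (hw : w = ∑ i, ∑ y, (a i y / c) • v i y) :
    c * ‖w‖ ^ 2 = ∑ i, ∑ y, a i y * ⟪w, v i y⟫ := by
  rcases eq_or_ne c 0 with rfl | hc
  · simp [hw]
  · rw [← real_inner_self_eq_norm_sq]
    nth_rw 2 [hw]
    simp only [inner_sum, real_inner_smul_right, Finset.mul_sum]
    congr! 2 with i _ y _
    field_simp

theorem svm_lagrangian_gap_eq_linearization_gap_general {d n : ℕ} (hn : 1 ≤ n)
    (lam : ℝ)
    (k : Fin n → ℕ)
    (ψ : ∀ i : Fin n, Fin (k i) → EuclideanSpace ℝ (Fin d))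
    (L : ∀ i : Fin n, Fin (k i) → ℝ)
    (Amul : (∀ i : Fin n, Fin (k i) → ℝ) → EuclideanSpace ℝ (Fin d))
    (hAmul : ∀ α, Amul α = ∑ i, ∑ y, (α i y / (lam * n)) • ψ i y)
    (gradf : (∀ i : Fin n, Fin (k i) → ℝ) → (∀ i : Fin n, Fin (k i) → ℝ))
    (hgrad : ∀ α i y,
        gradf α i y = -(L i y - ⟪Amul α, ψ i y⟫) / n)
    (P : EuclideanSpace ℝ (Fin d) → ℝ)
    (hP : ∀ w, P w = lam / 2 * ‖w‖ ^ 2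
        + (1 / n : ℝ) * ∑ i, ⨆ y : Fin (k i), (L i y - ⟪w, ψ i y⟫))
    (Dval : (∀ i : Fin n, Fin (k i) → ℝ) → ℝ)
    (hDval : ∀ α, Dval α = (∑ i, ∑ y, (L i y / n) * α i y)
        - lam / 2 * ‖Amul α‖ ^ 2)
    (Dset : Set (∀ i : Fin n, Fin (k i) → ℝ))
    (hD : Dset = {α | ∀ i, α i ∈ stdSimplex ℝ (Fin (k i))})
    (α : ∀ i : Fin n, Fin (k i) → ℝ) (hα : α ∈ Dset)
    (s : ∀ i : Fin n, Fin (k i) → ℝ) (hs : s ∈ Dset)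
    (hsmin : ∀ s' ∈ Dset,
        (∑ i, ∑ y, s i y * gradf α i y) ≤ ∑ i, ∑ y, s' i y * gradf α i y) :
    P (Amul α) - Dval α = ∑ i, ∑ y, (α i y - s i y) * gradf α i y := by
  subst hD
  set w := Amul α with hw
  have hn₀ : (n : ℝ) ≠ 0 := Nat.cast_ne_zero.mpr (Nat.one_le_iff_ne_zero.mp hn)
  have (i : Fin n) : Nonempty (Fin (k i)) := nonempty_of_mem_stdSimplex (hα i)
  choose y₀ hy₀ using fun i ↦ Finite.exists_max fun y : Fin (k i) ↦ L i y - ⟪w, ψ i y⟫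
  have hsup (i : Fin n) : ⨆ y, (L i y - ⟪w, ψ i y⟫) = L i (y₀ i) - ⟪w, ψ i (y₀ i)⟫ :=
    ciSup_eq_of_forall_le_of_forall_lt_exists_gt (hy₀ i) fun _ h ↦ ⟨y₀ i, h⟩
  have hs_grad : ∑ i, ∑ y, s i y * gradf α i y
      = -(1 / n : ℝ) * ∑ i, ⨆ y : Fin (k i), (L i y - ⟪w, ψ i y⟫) := by
    rw [sum_sum_mul_eq_of_isMinOn_pi_stdSimplex (fun i y ↦ ?_) hs (isMinOn_iff.mpr hsmin)]
    · simp only [hgrad, hsup, Finset.mul_sum, ← hw]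
      congr! 1 with i
      ring
    · simp only [hgrad, ← hw]
      exact div_le_div_of_nonneg_right (neg_le_neg (hy₀ i y)) n.cast_nonneg
  have hα_grad : ∑ i, ∑ y, α i y * gradf α i y
      = lam * ‖w‖ ^ 2 - ∑ i, ∑ y, (L i y / n) * α i y := by
    calc ∑ i, ∑ y, α i y * gradf α i y
        = (1 / n : ℝ) * ∑ i, ∑ y, α i y * ⟪w, ψ i y⟫ - ∑ i, ∑ y, (L i y / n) * α i y := by
          simp only [hgrad, Finset.mul_sum, ← Finset.sum_sub_distrib, ← hw]
          congr! 2 with i _ y _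
          ring
      _ = lam * ‖w‖ ^ 2 - ∑ i, ∑ y, (L i y / n) * α i y := by
          rw [← mul_norm_sq_eq_sum_sum_mul_inner _ α ψ (hw.trans (hAmul α))]
          field_simp
  rw [hP, hDval, ← hw]
  simp only [sub_mul, Finset.sum_sub_distrib, hα_grad, hs_grad]
  ring

/-- For the structural SVM, the Lagrangian duality gap between the primal
objective at `w = Aα` and the dual objective at `α` equals the linearization
gap `⟨α − s, ∇f(α)⟩`, where `s` minimizes the linearized dual over the product
of simplices. -/
theorem svm_lagrangian_gap_eq_linearization_gap {d n : ℕ} (hn : 1 ≤ n)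
    (lam : ℝ) (hlam : 0 < lam)
    (k : Fin n → ℕ) (hk : ∀ i, 1 ≤ k i)
    (ψ : ∀ i : Fin n, Fin (k i) → EuclideanSpace ℝ (Fin d))
    (L : ∀ i : Fin n, Fin (k i) → ℝ)
    (Amul : (∀ i : Fin n, Fin (k i) → ℝ) → EuclideanSpace ℝ (Fin d))
    (hAmul : ∀ α, Amul α = ∑ i, ∑ y, (α i y / (lam * n)) • ψ i y)
    (f : (∀ i : Fin n, Fin (k i) → ℝ) → ℝ)
    (hf : ∀ α, f α = lam / 2 * ‖Amul α‖ ^ 2 - ∑ i, ∑ y, (L i y / n) * α i y)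
    (gradf : (∀ i : Fin n, Fin (k i) → ℝ) → (∀ i : Fin n, Fin (k i) → ℝ))
    (hgrad : ∀ α i y,
        gradf α i y = -(L i y - ⟪Amul α, ψ i y⟫) / n)
    (P : EuclideanSpace ℝ (Fin d) → ℝ)
    (hP : ∀ w, P w = lam / 2 * ‖w‖ ^ 2
        + (1 / n : ℝ) * ∑ i, ⨆ y : Fin (k i), (L i y - ⟪w, ψ i y⟫))
    (Dval : (∀ i : Fin n, Fin (k i) → ℝ) → ℝ)
    (hDval : ∀ α, Dval α = (∑ i, ∑ y, (L i y / n) * α i y)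
        - lam / 2 * ‖Amul α‖ ^ 2)
    (Dset : Set (∀ i : Fin n, Fin (k i) → ℝ))
    (hD : Dset = {α | ∀ i, α i ∈ stdSimplex ℝ (Fin (k i))})
    (α : ∀ i : Fin n, Fin (k i) → ℝ) (hα : α ∈ Dset)
    (s : ∀ i : Fin n, Fin (k i) → ℝ) (hs : s ∈ Dset)
    (hsmin : ∀ s' ∈ Dset,
        (∑ i, ∑ y, s i y * gradf α i y) ≤ ∑ i, ∑ y, s' i y * gradf α i y) :
    P (Amul α) - Dval α = ∑ i, ∑ y, (α i y - s i y) * gradf α i y :=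
  svm_lagrangian_gap_eq_linearization_gap_general hn lam k ψ L Amul hAmul gradf hgrad P hP Dval
    hDval Dset hD α hα s hs hsmin
end
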